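/- Let z, z' be complex numbers, let μ be a Young diagram with |μ| = m, let n ≥ 0 be such that zz' + n ≠ 0, and let λ be a Young diagram with |λ| = n. Then ∑_{ν : ν ↘ λ} p↑(λ,ν) · ∑_{κ : κ ↗ ν} (dim κ / dim ν) · FS_μ(κ) − FS_μ(λ) = −( m(m−1+zz') / ((n+1)(zz'+n)) ) · FS_μ(λ) + ( (n+1−m) / ((n+1)(zz'+n)) ) · ∑_{μ• : μ• ↗ μ} (z)_{μ/μ•} (z')_{μ/μ•} · FS_{μ•}(λ), where p↑(λ,ν) := (z)_{ν/λ}(z')_{ν/λ} · dim ν / ((zz'+n)(n+1) · dim λ). (This computes the action of T_n − 1 on the Frobenius–Schur function FS_μ, where T_n is the up–down transition operator of the z-measures.) -/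

import Mathlib

/-- `μ ↗ ν` : the Young diagram `ν` is obtained from `μ` by adding one box. -/
def YoungDiagram.Covers (μ ν : YoungDiagram) : Prop :=
  μ ≤ ν ∧ ν.card = μ.card + 1

/-- `dim(μ,λ)`: the number of saturated chains `μ = ν₀ ↗ ν₁ ↗ … ↗ ν_{|λ|-|μ|} = λ`
(the number of standard Young tableaux of skew shape `λ/μ`); it vanishes when `μ ⊄ λ`. -/
noncomputable def YoungDiagram.skewDim (μ l : YoungDiagram) : ℕ :=
  Nat.card {f : Fin (l.card - μ.card + 1) → YoungDiagram //
    f 0 = μ ∧ f (Fin.last _) = l ∧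
    ∀ i : Fin (l.card - μ.card), YoungDiagram.Covers (f i.castSucc) (f i.succ)}

/-- `dim λ`: the number of standard Young tableaux of shape `λ`. -/
noncomputable def YoungDiagram.dim (l : YoungDiagram) : ℕ :=
  YoungDiagram.skewDim ⊥ l

/-- The value `FS_μ(λ)` of the Frobenius–Schur function (as a complex number):
`FS_μ(λ) = n(n-1)⋯(n-m+1) · dim(μ,λ)/dim λ` where `n = |λ|`, `m = |μ|`. -/
noncomputable def YoungDiagram.FS (μ l : YoungDiagram) : ℂ :=
  (∏ i ∈ Finset.range μ.card, ((l.card : ℂ) - (i : ℂ))) * (μ.skewDim l : ℂ) / (l.dim : ℂ)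

/-- `(w)_{λ/μ} = ∏_{(i,j) ∈ λ∖μ} (w + j - i)`, the product of `w` shifted by the contents
of the boxes of the skew diagram `λ/μ`. -/
noncomputable def YoungDiagram.poch (w : ℂ) (μ l : YoungDiagram) : ℂ :=
  ∏ b ∈ l.cells \ μ.cells, (w + (b.2 : ℂ) - (b.1 : ℂ))

/-!
Write `W(κ, ν) = (z)_{ν/κ} (z')_{ν/κ}` for `κ ↗ ν`. Since `dim(μ, ν) = ∑_{κ ↗ ν} dim(μ, κ)`, the
down step sends `FS_μ` to `n(n-1)⋯(n-m+1) dim(μ, ν) / dim ν`, and the theorem reduces to the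
commutation relation
`∑_{ν ↘ λ} W(λ, ν) dim(μ, ν) = ((n+1)(zz'+n) - m(m-1+zz')) dim(μ, λ) + ∑_{κ ↗ μ} W(κ, μ) dim(κ, λ)`,
proved by descending induction on `|μ|` after splitting off the first step of the chains from `μ`.
Two facts close the induction. First, the corner identity
`∑_{ν ↘ μ} W(μ, ν) - ∑_{κ ↗ μ} W(κ, μ) = zz' + 2|μ|`: row `i + 1` has an addable cell exactly when
row `i` has a removable one, and the difference of their weights, as a function of the two row
lengths, vanishes when these are equal; so the identity becomes a sum over all rows, which
telescopes. Second,
the diamond property pairs the remaining terms: distinct `μ, τ ↗ ν` satisfy `μ ⊓ τ ↗ μ, τ` and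
`μ ⊔ τ = ν`, and `W(τ, μ ⊔ τ) = W(μ ⊓ τ, μ)` because both skew shapes are the same cell.
-/

section RelChains

variable {α : Type*} (r : α → α → Prop)

def relChains (a b : α) (k : ℕ) : Set (Fin (k + 1) → α) :=
  {f | f 0 = a ∧ f (Fin.last k) = b ∧ ∀ i : Fin k, r (f i.castSucc) (f i.succ)}

def relChainsSuccEquiv (a b : α) (k : ℕ) :
    relChains r a b (k + 1) ≃ Σ c : {c // r c b}, relChains r a c k where
  toFun f := ⟨⟨f.1 (Fin.last k).castSucc, by
      have h := f.2.2.2 (Fin.last k)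
      rwa [Fin.succ_last, f.2.2.1] at h⟩,
    ⟨Fin.init f.1, f.2.1, rfl, fun (i : Fin k) => by
      have h := f.2.2.2 i.castSucc
      rwa [Fin.succ_castSucc] at h⟩⟩
  invFun p := ⟨Fin.snoc p.2.1 b, by
      rw [← Fin.castSucc_zero, Fin.snoc_castSucc]
      exact p.2.2.1,
    Fin.snoc_last _ _, Fin.lastCases (by
      rw [Fin.snoc_castSucc, Fin.succ_last, Fin.snoc_last, p.2.2.2.1]
      exact p.1.2) fun i => by
      rw [Fin.snoc_castSucc, Fin.succ_castSucc, Fin.snoc_castSucc]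
      exact p.2.2.2.2 i⟩
  left_inv f := by
    refine Subtype.ext (funext (Fin.lastCases ?_ fun i => ?_)) <;> dsimp only
    · rw [Fin.snoc_last, f.2.2.1]
    · rw [Fin.snoc_castSucc, Fin.init]
  right_inv p := by
    refine Sigma.subtype_ext (Subtype.ext ?_) ?_ <;> dsimp only
    · rw [Fin.snoc_castSucc]
      exact p.2.2.2.1
    · exact Fin.init_snoc _ _

def relChainsRevEquiv (a b : α) (k : ℕ) : relChains r a b k ≃ relChains (flip r) b a k where
  toFun f := ⟨f.1 ∘ Fin.rev, by simpa using f.2.2.1, by simpa using f.2.1,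
    fun i => by simpa [flip, Fin.rev_castSucc, Fin.rev_succ] using f.2.2.2 i.rev⟩
  invFun f := ⟨f.1 ∘ Fin.rev, by simpa using f.2.2.1, by simpa using f.2.1,
    fun i => by simpa [flip, Fin.rev_castSucc, Fin.rev_succ] using f.2.2.2 i.rev⟩
  left_inv f := by ext; simp
  right_inv f := by ext; simp

lemma card_relChains_zero [DecidableEq α] (a b : α) :
    Nat.card (relChains r a b 0) = if a = b then 1 else 0 := by
  split_ifs with hab
  · subst hab
    refine Nat.card_eq_one_iff_unique.mpr ⟨⟨fun f g => Subtype.ext (funext fun i => ?_)⟩,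
      ⟨⟨fun _ => a, rfl, rfl, Fin.elim0⟩⟩⟩
    rw [Fin.fin_one_eq_zero i, f.2.1, g.2.1]
  · have : IsEmpty (relChains r a b 0) := ⟨fun f => hab (f.2.1.symm.trans f.2.2.1)⟩
    exact Nat.card_of_isEmpty

lemma card_relChains_succ {a b : α} {k : ℕ} [∀ c, Finite (relChains r a c k)] {s : Finset α}
    (hs : ∀ c, c ∈ s ↔ r c b) :
    Nat.card (relChains r a b (k + 1)) = ∑ c ∈ s, Nat.card (relChains r a c k) := by
  rw [Nat.card_congr ((relChainsSuccEquiv r a b k).trans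
    (Equiv.sigmaCongrLeft' (Equiv.subtypeEquivRight fun c => (hs c).symm))), Nat.card_sigma,
    ← Finset.sum_coe_sort s]
  rfl

end RelChains

/-- With `a` the row lengths of a diagram, the summands are the weights of the addable cell in
row `i + 1` and of the removable cell in row `i`. -/
lemma sum_range_corner_telescope (z z' : ℂ) (a : ℕ → ℂ) (N : ℕ) :
    (z + a 0) * (z' + a 0) + ∑ i ∈ Finset.range N,
        ((z + a (i + 1) - (i + 1)) * (z' + a (i + 1) - (i + 1))
          - (z + (a i - 1) - i) * (z' + (a i - 1) - i))
      = (z + a N - N) * (z' + a N - N) + N * (z + z') - N ^ 2 + 2 * ∑ i ∈ Finset.range N, a i := by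
  induction N with
  | zero => simp
  | succ N ih =>
    rw [Finset.sum_range_succ, ← add_assoc, ih, Finset.sum_range_succ]
    push_cast
    ring

namespace YoungDiagram

open Finset

instance : DecidableEq YoungDiagram := fun μ ν =>
  decidable_of_iff (μ.cells = ν.cells) YoungDiagram.ext_iff.symm

lemma card_lt_card_of_lt {μ ν : YoungDiagram} (h : μ < ν) : μ.card < ν.card :=
  Finset.card_lt_card (cells_ssubset_iff.mpr h)

lemma eq_of_le_of_card_le {μ ν : YoungDiagram} (h : μ ≤ ν) (hc : ν.card ≤ μ.card) : μ = ν :=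
  YoungDiagram.ext (Finset.eq_of_subset_of_card_le (cells_subset_iff.mpr h) hc)

lemma covers_iff_covBy_cells {κ μ : YoungDiagram} : Covers κ μ ↔ κ.cells ⋖ μ.cells := by
  rw [Finset.covBy_iff_card_sdiff_eq_one, cells_subset_iff, Covers]
  refine and_congr_right fun h => ?_
  rw [card_sdiff_of_subset (cells_subset_iff.mpr h), YoungDiagram.card, YoungDiagram.card]
  have := card_le_card (cells_subset_iff.mpr h)
  omega

lemma rowLen_pos_iff {μ : YoungDiagram} {i : ℕ} : 0 < μ.rowLen i ↔ i < μ.colLen 0 := by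
  rw [← mem_iff_lt_colLen, mem_iff_lt_rowLen]

lemma rowLen_colLen_zero (μ : YoungDiagram) : μ.rowLen (μ.colLen 0) = 0 := by
  by_contra h
  exact lt_irrefl _ (rowLen_pos_iff.mp (Nat.pos_of_ne_zero h))

lemma card_eq_sum_rowLen (μ : YoungDiagram) :
    μ.card = ∑ i ∈ range (μ.colLen 0), μ.rowLen i := by
  rw [YoungDiagram.card, card_eq_sum_card_fiberwise (f := Prod.fst) (t := range (μ.colLen 0))]
  · exact sum_congr rfl fun i _ => (μ.rowLen_eq_card).symm
  · rintro ⟨i, j⟩ hc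
    rw [mem_coe, mem_cells, mem_iff_lt_colLen] at hc
    exact mem_range.mpr (hc.trans_le (μ.colLen_anti 0 j j.zero_le))

/-! ### Adding and removing a corner cell -/

def IsAddableRow (μ : YoungDiagram) (i : ℕ) : Prop := i = 0 ∨ μ.rowLen i < μ.rowLen (i - 1)

def IsRemovableRow (μ : YoungDiagram) (i : ℕ) : Prop := μ.rowLen (i + 1) < μ.rowLen i

instance (μ : YoungDiagram) (i : ℕ) : Decidable (μ.IsAddableRow i) :=
  inferInstanceAs (Decidable (_ ∨ _))

instance (μ : YoungDiagram) (i : ℕ) : Decidable (μ.IsRemovableRow i) :=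
  inferInstanceAs (Decidable (_ < _))

lemma isAddableRow_succ_iff {μ : YoungDiagram} {i : ℕ} :
    μ.IsAddableRow (i + 1) ↔ μ.IsRemovableRow i := by
  simp [IsAddableRow, IsRemovableRow]

lemma IsRemovableRow.lt_colLen {μ : YoungDiagram} {i : ℕ} (h : μ.IsRemovableRow i) :
    i < μ.colLen 0 :=
  rowLen_pos_iff.mp (Nat.zero_lt_of_lt h)

lemma isLowerSet_insert_rowLen {μ : YoungDiagram} {i : ℕ} (h : μ.IsAddableRow i) :
    IsLowerSet ((insert (i, μ.rowLen i) μ.cells : Finset (ℕ × ℕ)) : Set (ℕ × ℕ)) := by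
  intro x y hle hx
  simp only [coe_insert, Set.mem_insert_iff, mem_coe, mem_cells] at hx ⊢
  rcases hx with rfl | hx
  · obtain ⟨a, b⟩ := y
    obtain ⟨ha, hb⟩ := hle
    simp only at ha hb
    rcases ha.lt_or_eq with hlt | rfl
    · have hrow : μ.rowLen i < μ.rowLen (i - 1) := h.resolve_left (by omega)
      exact Or.inr (mem_iff_lt_rowLen.mpr
        (hb.trans_lt (hrow.trans_le (μ.rowLen_anti _ _ (by omega)))))
    · rcases hb.lt_or_eq with hlt | rfl
      · exact Or.inr (mem_iff_lt_rowLen.mpr hlt)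
      · exact Or.inl rfl
  · exact Or.inr (μ.isLowerSet hle hx)

lemma isLowerSet_erase_rowLen {μ : YoungDiagram} {i : ℕ} (h : μ.IsRemovableRow i) :
    IsLowerSet ((μ.cells.erase (i, μ.rowLen i - 1) : Finset (ℕ × ℕ)) : Set (ℕ × ℕ)) := by
  rintro ⟨a, b⟩ y hle hx
  simp only [coe_erase, Set.mem_sdiff, mem_coe, mem_cells, Set.mem_singleton_iff] at hx ⊢
  refine ⟨μ.isLowerSet hle hx.1, fun hy => hx.2 ?_⟩
  rw [hy, Prod.mk_le_mk] at hle
  have hb : b < μ.rowLen a := mem_iff_lt_rowLen.mp hx.1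
  have hai := μ.rowLen_anti _ _ hle.1
  obtain rfl : a = i := by
    by_contra hne
    have := μ.rowLen_anti (i + 1) a (by omega)
    exact absurd h (by unfold IsRemovableRow; omega)
  rw [show b = μ.rowLen a - 1 by omega]

def addCell (μ : YoungDiagram) (i : ℕ) : YoungDiagram :=
  if h : μ.IsAddableRow i then ⟨insert (i, μ.rowLen i) μ.cells, isLowerSet_insert_rowLen h⟩
  else μ

def removeCell (μ : YoungDiagram) (i : ℕ) : YoungDiagram :=
  if h : μ.IsRemovableRow i then ⟨μ.cells.erase (i, μ.rowLen i - 1), isLowerSet_erase_rowLen h⟩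
  else μ

lemma cells_addCell {μ : YoungDiagram} {i : ℕ} (h : μ.IsAddableRow i) :
    (μ.addCell i).cells = insert (i, μ.rowLen i) μ.cells := by
  rw [addCell, dif_pos h]

lemma cells_removeCell {μ : YoungDiagram} {i : ℕ} (h : μ.IsRemovableRow i) :
    (μ.removeCell i).cells = μ.cells.erase (i, μ.rowLen i - 1) := by
  rw [removeCell, dif_pos h]

lemma mk_rowLen_notMem (μ : YoungDiagram) (i : ℕ) : (i, μ.rowLen i) ∉ μ.cells := by
  simp [mem_iff_lt_rowLen]

lemma IsRemovableRow.mem_cells {μ : YoungDiagram} {i : ℕ} (h : μ.IsRemovableRow i) :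
    (i, μ.rowLen i - 1) ∈ μ.cells := by
  rw [YoungDiagram.mem_cells, mem_iff_lt_rowLen]
  exact Nat.sub_one_lt_of_lt h

lemma covers_addCell {μ : YoungDiagram} {i : ℕ} (h : μ.IsAddableRow i) :
    Covers μ (μ.addCell i) := by
  rw [covers_iff_covBy_cells, cells_addCell h]
  exact covBy_insert (mk_rowLen_notMem μ i)

lemma removeCell_covers {μ : YoungDiagram} {i : ℕ} (h : μ.IsRemovableRow i) :
    Covers (μ.removeCell i) μ := by
  rw [covers_iff_covBy_cells, cells_removeCell h]
  exact erase_covBy h.mem_cells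

lemma Covers.exists_cells_eq_insert {κ μ : YoungDiagram} (h : Covers κ μ) :
    ∃ i, μ.cells = insert (i, κ.rowLen i) κ.cells := by
  obtain ⟨⟨i, j⟩, hx, hμ⟩ := (covers_iff_covBy_cells.mp h).exists_finset_insert
  refine ⟨i, ?_⟩
  rw [← hμ, show j = κ.rowLen i from ?_]
  rw [mem_cells, mem_iff_lt_rowLen, not_lt] at hx
  refine le_antisymm (not_lt.mp fun hlt => ?_) hx
  have hmem : (i, κ.rowLen i) ∈ μ.cells :=
    (mem_cells _).mpr (μ.up_left_mem le_rfl hlt.le ((mem_cells _).mp (hμ ▸ mem_insert_self _ _)))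
  rw [← hμ, mem_insert, Prod.mk.injEq] at hmem
  rcases hmem with ⟨-, rfl⟩ | hmem
  · exact lt_irrefl _ hlt
  · exact mk_rowLen_notMem κ i hmem

lemma Covers.exists_eq_addCell {κ μ : YoungDiagram} (h : Covers κ μ) :
    ∃ i, κ.IsAddableRow i ∧ μ = κ.addCell i := by
  obtain ⟨i, hμ⟩ := h.exists_cells_eq_insert
  have hadd : κ.IsAddableRow i := by
    rcases Nat.eq_zero_or_pos i with hi | hi
    · exact Or.inl hi
    have hmem : (i - 1, κ.rowLen i) ∈ μ.cells :=
      (mem_cells _).mpr (μ.up_left_mem (Nat.sub_le i 1) le_rfl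
        ((mem_cells _).mp (hμ ▸ mem_insert_self _ _)))
    rw [hμ, mem_insert, Prod.mk.injEq] at hmem
    refine Or.inr (mem_iff_lt_rowLen.mp ?_)
    exact hmem.resolve_left (by omega)
  exact ⟨i, hadd, YoungDiagram.ext (by rw [hμ, cells_addCell hadd])⟩

lemma Covers.exists_eq_removeCell {κ μ : YoungDiagram} (h : Covers κ μ) :
    ∃ i, μ.IsRemovableRow i ∧ κ = μ.removeCell i := by
  obtain ⟨i, hμ⟩ := h.exists_cells_eq_insert
  have hmem : ∀ j, (i, j) ∈ μ ↔ j < κ.rowLen i + 1 := fun j => by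
    rw [← mem_cells, hμ, mem_insert, mem_cells, mem_iff_lt_rowLen, Prod.mk.injEq]
    omega
  have hlen : μ.rowLen i = κ.rowLen i + 1 := by
    refine le_antisymm (le_of_forall_lt fun j hj => ?_) (le_of_forall_lt fun j hj => ?_)
    · exact (hmem j).mp (mem_iff_lt_rowLen.mpr hj)
    · exact mem_iff_lt_rowLen.mp ((hmem j).mpr hj)
  have hrem : μ.IsRemovableRow i := by
    have hnot : (i + 1, κ.rowLen i) ∉ μ.cells := by
      rw [hμ, mem_insert, Prod.mk.injEq, mem_cells, mem_iff_lt_rowLen]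
      have := κ.rowLen_anti i (i + 1) (Nat.le_succ i)
      omega
    rw [mem_cells, mem_iff_lt_rowLen] at hnot
    unfold IsRemovableRow
    omega
  refine ⟨i, hrem, YoungDiagram.ext ?_⟩
  rw [cells_removeCell hrem, hlen, Nat.add_sub_cancel, hμ, erase_insert (mk_rowLen_notMem κ i)]

def removableRows (μ : YoungDiagram) : Finset ℕ := (range (μ.colLen 0)).filter μ.IsRemovableRow

def addableRows (μ : YoungDiagram) : Finset ℕ :=
  insert 0 ((removableRows μ).map (addRightEmbedding 1))

lemma mem_removableRows {μ : YoungDiagram} {i : ℕ} : i ∈ removableRows μ ↔ μ.IsRemovableRow i := by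
  simp only [removableRows, mem_filter, mem_range, and_iff_right_iff_imp]
  exact IsRemovableRow.lt_colLen

lemma mem_addableRows {μ : YoungDiagram} {i : ℕ} : i ∈ addableRows μ ↔ μ.IsAddableRow i := by
  rcases i with _ | i
  · simp [addableRows, IsAddableRow]
  · simp [addableRows, mem_removableRows, isAddableRow_succ_iff]

def above (μ : YoungDiagram) : Finset YoungDiagram := (addableRows μ).image μ.addCell

def below (μ : YoungDiagram) : Finset YoungDiagram := (removableRows μ).image μ.removeCell

lemma mem_above {μ ν : YoungDiagram} : ν ∈ above μ ↔ Covers μ ν := by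
  simp only [above, mem_image, mem_addableRows]
  exact ⟨fun ⟨i, hi, hν⟩ => hν ▸ covers_addCell hi,
    fun h => let ⟨i, hi, hν⟩ := h.exists_eq_addCell; ⟨i, hi, hν.symm⟩⟩

lemma mem_below {κ μ : YoungDiagram} : κ ∈ below μ ↔ Covers κ μ := by
  simp only [below, mem_image, mem_removableRows]
  exact ⟨fun ⟨i, hi, hκ⟩ => hκ ▸ removeCell_covers hi,
    fun h => let ⟨i, hi, hκ⟩ := h.exists_eq_removeCell; ⟨i, hi, hκ.symm⟩⟩

lemma sum_above {M : Type*} [AddCommMonoid M] (μ : YoungDiagram) (f : YoungDiagram → M) :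
    ∑ ν ∈ above μ, f ν = ∑ i ∈ addableRows μ, f (μ.addCell i) := by
  refine sum_image fun i hi j hj hij => ?_
  have hmem : (i, μ.rowLen i) ∈ (μ.addCell j).cells := by
    rw [← hij, cells_addCell (mem_addableRows.mp hi)]
    exact mem_insert_self _ _
  rw [cells_addCell (mem_addableRows.mp hj), mem_insert, Prod.mk.injEq] at hmem
  exact hmem.elim And.left fun h => absurd h (mk_rowLen_notMem μ i)

lemma sum_below {M : Type*} [AddCommMonoid M] (μ : YoungDiagram) (f : YoungDiagram → M) :
    ∑ κ ∈ below μ, f κ = ∑ i ∈ removableRows μ, f (μ.removeCell i) := by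
  refine sum_image fun i hi j hj hij => ?_
  have hi' := mem_removableRows.mp hi
  have hnot : (i, μ.rowLen i - 1) ∉ (μ.removeCell j).cells := by
    rw [← hij, cells_removeCell hi']
    exact notMem_erase _ _
  rw [cells_removeCell (mem_removableRows.mp hj), mem_erase] at hnot
  by_contra hne
  exact hnot ⟨fun h => hne (congrArg Prod.fst h), hi'.mem_cells⟩

lemma poch_addCell (w : ℂ) {μ : YoungDiagram} {i : ℕ} (h : μ.IsAddableRow i) :
    poch w μ (μ.addCell i) = w + μ.rowLen i - i := by
  rw [poch, cells_addCell h, insert_sdiff_of_notMem _ (mk_rowLen_notMem μ i), sdiff_self,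
    bot_eq_empty, insert_empty, prod_singleton]

lemma poch_removeCell (w : ℂ) {μ : YoungDiagram} {i : ℕ} (h : μ.IsRemovableRow i) :
    poch w (μ.removeCell i) μ = w + (μ.rowLen i - 1) - i := by
  rw [poch, cells_removeCell h, sdiff_erase_self h.mem_cells, prod_singleton,
    Nat.cast_sub (Nat.one_le_of_lt h), Nat.cast_one]

/-! ### The corner identity -/

noncomputable def zWeight (z z' : ℂ) (κ μ : YoungDiagram) : ℂ := poch z κ μ * poch z' κ μ

theorem sum_above_zWeight (z z' : ℂ) (μ : YoungDiagram) :
    ∑ ν ∈ above μ, zWeight z z' μ ν = ∑ κ ∈ below μ, zWeight z z' κ μ + (z * z' + 2 * μ.card) := by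
  set r : ℕ → ℂ := fun i => μ.rowLen i
  set A : ℕ → ℂ := fun i => (z + r (i + 1) - (i + 1)) * (z' + r (i + 1) - (i + 1))
  set B : ℕ → ℂ := fun i => (z + (r i - 1) - i) * (z' + (r i - 1) - i)
  have hAbove : ∑ ν ∈ above μ, zWeight z z' μ ν
      = (z + r 0) * (z' + r 0) + ∑ i ∈ removableRows μ, A i := by
    rw [sum_above, addableRows, sum_insert (by simp), sum_map]
    simp only [zWeight, poch_addCell _ (Or.inl rfl : μ.IsAddableRow 0), Nat.cast_zero, sub_zero]
    congr 1
    refine sum_congr rfl fun i hi => ?_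
    have h := isAddableRow_succ_iff.mpr (mem_removableRows.mp hi)
    simp only [addRightEmbedding_apply, poch_addCell _ h, A, r, Nat.cast_add, Nat.cast_one]
  have hBelow : ∑ κ ∈ below μ, zWeight z z' κ μ = ∑ i ∈ removableRows μ, B i := by
    rw [sum_below]
    exact sum_congr rfl fun i hi => by
      simp only [zWeight, poch_removeCell _ (mem_removableRows.mp hi), B, r]
  have hRange : ∑ i ∈ removableRows μ, (A i - B i) = ∑ i ∈ range (μ.colLen 0), (A i - B i) := by
    refine sum_subset (filter_subset _ _) fun i _ hi => ?_
    have hr : μ.rowLen (i + 1) = μ.rowLen i :=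
      le_antisymm (μ.rowLen_anti _ _ i.le_succ) (not_lt.mp (mt mem_removableRows.mpr hi))
    simp only [A, B, r, hr]
    ring
  have hTele : (z + r 0) * (z' + r 0) + ∑ i ∈ range (μ.colLen 0), (A i - B i)
      = (z + r (μ.colLen 0) - μ.colLen 0) * (z' + r (μ.colLen 0) - μ.colLen 0)
        + μ.colLen 0 * (z + z') - μ.colLen 0 ^ 2 + 2 * ∑ i ∈ range (μ.colLen 0), r i :=
    sum_range_corner_telescope z z' r (μ.colLen 0)
  have hrN : r (μ.colLen 0) = 0 := by simp [r, rowLen_colLen_zero]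
  rw [hrN, ← hRange, sum_sub_distrib] at hTele
  rw [hAbove, hBelow, card_eq_sum_rowLen, Nat.cast_sum]
  linear_combination hTele

/-! ### Skew dimensions -/

lemma skewDim_eq_card_relChains (μ l : YoungDiagram) :
    skewDim μ l = Nat.card (relChains Covers μ l (l.card - μ.card)) := rfl

instance (l : YoungDiagram) : Finite {κ : YoungDiagram // κ ≤ l} :=
  Finite.of_injective (fun κ => (⟨κ.1.cells, mem_powerset.mpr (cells_subset_iff.mpr κ.2)⟩ :
    l.cells.powerset)) fun _ _ h => Subtype.ext (YoungDiagram.ext (congrArg Subtype.val h))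

instance (μ l : YoungDiagram) (k : ℕ) : Finite (relChains Covers μ l k) := by
  refine Finite.of_injective (β := Fin (k + 1) → {κ : YoungDiagram // κ ≤ l})
    (fun f i => ⟨f.1 i, ?_⟩)
    fun f g h => Subtype.ext (funext fun i => congrArg Subtype.val (congrFun h i))
  have hmono : Monotone f.1 := Fin.monotone_iff_le_succ.mpr fun i => (f.2.2.2 i).1
  simpa only [f.2.2.1] using hmono (Fin.le_last i)

lemma skewDim_of_card_le {μ l : YoungDiagram} (h : l.card ≤ μ.card) :
    skewDim μ l = if μ = l then 1 else 0 := by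
  rw [skewDim_eq_card_relChains, Nat.sub_eq_zero_of_le h, card_relChains_zero]

lemma skewDim_eq_sum_below {μ l : YoungDiagram} (h : μ.card < l.card) :
    skewDim μ l = ∑ κ ∈ below l, skewDim μ κ := by
  obtain ⟨k, hk⟩ : ∃ k, l.card - μ.card = k + 1 := ⟨l.card - μ.card - 1, by omega⟩
  rw [skewDim_eq_card_relChains, hk, card_relChains_succ Covers fun κ => mem_below]
  refine sum_congr rfl fun κ hκ => ?_
  have := (mem_below.mp hκ).2
  rw [skewDim_eq_card_relChains, show κ.card - μ.card = k by omega]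

lemma skewDim_eq_sum_above {μ l : YoungDiagram} (h : μ.card < l.card) :
    skewDim μ l = ∑ ν ∈ above μ, skewDim ν l := by
  obtain ⟨k, hk⟩ : ∃ k, l.card - μ.card = k + 1 := ⟨l.card - μ.card - 1, by omega⟩
  have (ν : YoungDiagram) : Finite (relChains (flip Covers) l ν k) :=
    Finite.of_equiv _ (relChainsRevEquiv Covers ν l k)
  rw [skewDim_eq_card_relChains, hk, Nat.card_congr (relChainsRevEquiv Covers μ l (k + 1)),
    card_relChains_succ (flip Covers) fun ν => mem_above]
  refine sum_congr rfl fun ν hν => ?_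
  have := (mem_above.mp hν).2
  rw [skewDim_eq_card_relChains, show l.card - ν.card = k by omega,
    Nat.card_congr (relChainsRevEquiv Covers ν l k)]

lemma below_nonempty {l : YoungDiagram} (h : 0 < l.card) : (below l).Nonempty := by
  obtain ⟨⟨a, b⟩, hx⟩ := card_pos.mp h
  have h00 : (0, 0) ∈ l := l.up_left_mem a.zero_le b.zero_le ((mem_cells _).mp hx)
  have hN : 0 < l.colLen 0 := mem_iff_lt_colLen.mp h00
  have hrem : l.IsRemovableRow (l.colLen 0 - 1) := by
    rw [IsRemovableRow, Nat.sub_add_cancel hN, rowLen_colLen_zero]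
    exact rowLen_pos_iff.mpr (Nat.sub_one_lt_of_lt hN)
  exact ⟨_, mem_below.mpr (removeCell_covers hrem)⟩

theorem dim_pos (l : YoungDiagram) : 0 < l.dim := by
  induction h : l.card generalizing l with
  | zero =>
    rw [show l = ⊥ from YoungDiagram.ext (card_eq_zero.mp h), dim, skewDim_of_card_le le_rfl,
      if_pos rfl]
    exact Nat.one_pos
  | succ n ih =>
    obtain ⟨κ, hκ⟩ := below_nonempty (l := l) (by omega)
    have hκn : κ.card = n := by have := (mem_below.mp hκ).2; omega
    rw [dim, skewDim_eq_sum_below (by simp [YoungDiagram.card, h])]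
    exact (ih κ hκn).trans_le (single_le_sum (fun _ _ => Nat.zero_le _) hκ)

/-! ### Diamonds -/

lemma card_inf_add_card_sup (μ τ : YoungDiagram) :
    (μ ⊓ τ).card + (μ ⊔ τ).card = μ.card + τ.card := by
  simp only [YoungDiagram.card, cells_inf, cells_sup]
  exact card_inter_add_card_union _ _

lemma covers_inf_iff_covers_sup {μ τ : YoungDiagram} (h : τ.card = μ.card) :
    Covers (μ ⊓ τ) μ ↔ Covers μ (μ ⊔ τ) := by
  have := card_inf_add_card_sup μ τ
  simp only [Covers, inf_le_left, le_sup_left, true_and]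
  omega

lemma sup_eq_and_covers_inf {μ τ ν : YoungDiagram} (hμ : Covers μ ν) (hτ : Covers τ ν)
    (hne : τ ≠ μ) : μ ⊔ τ = ν ∧ Covers (μ ⊓ τ) μ ∧ Covers (μ ⊓ τ) τ := by
  have hcard : τ.card = μ.card := by have := hμ.2; have := hτ.2; omega
  have hlt : μ < μ ⊔ τ := lt_of_le_of_ne le_sup_left fun h =>
    hne (eq_of_le_of_card_le (h ▸ le_sup_right) hcard.ge)
  have hsup : μ ⊔ τ = ν :=
    eq_of_le_of_card_le (sup_le hμ.1 hτ.1) (hμ.2 ▸ card_lt_card_of_lt hlt)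
  refine ⟨hsup, (covers_inf_iff_covers_sup hcard).mpr ⟨le_sup_left, hsup ▸ hμ.2⟩, ?_⟩
  rw [inf_comm]
  exact (covers_inf_iff_covers_sup hcard.symm).mpr ⟨le_sup_left, sup_comm μ τ ▸ hsup ▸ hτ.2⟩

lemma inf_eq_and_covers_sup {κ μ τ : YoungDiagram} (hμ : Covers κ μ) (hτ : Covers κ τ)
    (hne : τ ≠ μ) : μ ⊓ τ = κ ∧ Covers μ (μ ⊔ τ) ∧ Covers τ (μ ⊔ τ) := by
  have hcard : τ.card = μ.card := by have := hμ.2; have := hτ.2; omega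
  have hlt : μ ⊓ τ < μ := lt_of_le_of_ne inf_le_left fun h =>
    hne (eq_of_le_of_card_le (h ▸ inf_le_right) hcard.le).symm
  have hinf : μ ⊓ τ = κ := (eq_of_le_of_card_le (le_inf hμ.1 hτ.1)
    (by have := card_lt_card_of_lt hlt; have := hμ.2; omega)).symm
  refine ⟨hinf, (covers_inf_iff_covers_sup hcard).mp (hinf ▸ hμ), ?_⟩
  rw [sup_comm]
  exact (covers_inf_iff_covers_sup hcard.symm).mp (inf_comm μ τ ▸ hinf ▸ hτ)

lemma poch_sup (w : ℂ) (μ τ : YoungDiagram) : poch w τ (μ ⊔ τ) = poch w (μ ⊓ τ) μ := by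
  rw [poch, poch, cells_sup, cells_inf, union_sdiff_right, sdiff_inter_self_left]

theorem sum_above_sum_below_erase_zWeight (z z' : ℂ) (μ : YoungDiagram) (d : YoungDiagram → ℂ) :
    ∑ ν ∈ above μ, ∑ τ ∈ (below ν).erase μ, zWeight z z' τ ν * d τ
      = ∑ κ ∈ below μ, ∑ τ ∈ (above κ).erase μ, zWeight z z' κ μ * d τ := by
  rw [sum_sigma', sum_sigma']
  refine sum_nbij' (fun p => ⟨μ ⊓ p.2, p.2⟩) (fun p => ⟨μ ⊔ p.2, p.2⟩) ?_ ?_ ?_ ?_ ?_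
  · rintro ⟨ν, τ⟩ hp
    simp only [mem_sigma, mem_erase, mem_above, mem_below] at hp ⊢
    obtain ⟨-, h1, h2⟩ := sup_eq_and_covers_inf hp.1 hp.2.2 hp.2.1
    exact ⟨h1, hp.2.1, h2⟩
  · rintro ⟨κ, τ⟩ hp
    simp only [mem_sigma, mem_erase, mem_above, mem_below] at hp ⊢
    obtain ⟨-, h1, h2⟩ := inf_eq_and_covers_sup hp.1 hp.2.2 hp.2.1
    exact ⟨h1, hp.2.1, h2⟩
  · rintro ⟨ν, τ⟩ hp
    simp only [mem_sigma, mem_erase, mem_above, mem_below] at hp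
    rw [(sup_eq_and_covers_inf hp.1 hp.2.2 hp.2.1).1]
  · rintro ⟨κ, τ⟩ hp
    simp only [mem_sigma, mem_erase, mem_above, mem_below] at hp
    rw [(inf_eq_and_covers_sup hp.1 hp.2.2 hp.2.1).1]
  · rintro ⟨ν, τ⟩ hp
    simp only [mem_sigma, mem_erase, mem_above, mem_below] at hp
    rw [← (sup_eq_and_covers_inf hp.1 hp.2.2 hp.2.1).1]
    simp only [zWeight, poch_sup]

/-! ### The commutation relation -/

theorem sum_above_sum_below_zWeight_mul_skewDim (z z' : ℂ) {μ l : YoungDiagram}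
    (h : μ.card ≤ l.card) :
    ∑ ν ∈ above μ, ∑ κ ∈ below ν, zWeight z z' κ ν * skewDim κ l
      = (z * z' + 2 * μ.card) * skewDim μ l + ∑ κ ∈ below μ, zWeight z z' κ μ * skewDim κ l := by
  have hleft : ∀ ν ∈ above μ, ∑ κ ∈ below ν, zWeight z z' κ ν * skewDim κ l
      = zWeight z z' μ ν * skewDim μ l + ∑ κ ∈ (below ν).erase μ, zWeight z z' κ ν * skewDim κ l :=
    fun ν hν => (add_sum_erase _ _ (mem_below.mpr (mem_above.mp hν))).symm
  have hright : ∀ κ ∈ below μ, zWeight z z' κ μ * skewDim κ l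
      = zWeight z z' κ μ * skewDim μ l
        + ∑ τ ∈ (above κ).erase μ, zWeight z z' κ μ * skewDim τ l := by
    intro κ hκ
    have := (mem_below.mp hκ).2
    rw [skewDim_eq_sum_above (by omega), Nat.cast_sum, mul_sum,
      ← add_sum_erase _ _ (mem_above.mpr (mem_below.mp hκ))]
  rw [sum_congr rfl hleft, sum_congr rfl hright, sum_add_distrib, sum_add_distrib, ← sum_mul,
    ← sum_mul, sum_above_sum_below_erase_zWeight, sum_above_zWeight]
  ring

lemma sum_above_zWeight_mul_skewDim_of_card_lt (z z' : ℂ) {μ l : YoungDiagram}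
    (h : l.card < μ.card) :
    ∑ ν ∈ above l, zWeight z z' l ν * skewDim μ ν
      = ∑ κ ∈ below μ, zWeight z z' κ μ * skewDim κ l := by
  have hup : ∀ ν ∈ above l, zWeight z z' l ν * skewDim μ ν
      = if μ = ν then zWeight z z' l ν else 0 := by
    intro ν hν
    have := (mem_above.mp hν).2
    rw [skewDim_of_card_le (by omega)]
    split_ifs <;> simp
  have hdown : ∀ κ ∈ below μ, zWeight z z' κ μ * skewDim κ l
      = if κ = l then zWeight z z' κ μ else 0 := by
    intro κ hκ
    have := (mem_below.mp hκ).2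
    rw [skewDim_of_card_le (by omega)]
    split_ifs <;> simp
  rw [sum_congr rfl hup, sum_congr rfl hdown, sum_ite_eq, sum_ite_eq']
  exact if_congr (mem_above.trans mem_below.symm) rfl rfl

theorem sum_above_zWeight_mul_skewDim (z z' : ℂ) (μ l : YoungDiagram) :
    ∑ ν ∈ above l, zWeight z z' l ν * skewDim μ ν
      = (((l.card : ℂ) + 1) * (z * z' + l.card) - μ.card * (μ.card - 1 + z * z')) * skewDim μ l
        + ∑ κ ∈ below μ, zWeight z z' κ μ * skewDim κ l := by
  rcases lt_or_ge l.card μ.card with h | h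
  · rw [skewDim_of_card_le h.le, if_neg fun he => h.ne' (congrArg YoungDiagram.card he),
      Nat.cast_zero, mul_zero, zero_add, sum_above_zWeight_mul_skewDim_of_card_lt z z' h]
  have ih : ∀ ν ∈ above μ, ∑ ν' ∈ above l, zWeight z z' l ν' * skewDim ν ν'
      = (((l.card : ℂ) + 1) * (z * z' + l.card) - (μ.card + 1) * (μ.card + z * z'))
          * skewDim ν l + ∑ κ ∈ below ν, zWeight z z' κ ν * skewDim κ l := by
    intro ν hν
    have hν := (mem_above.mp hν).2
    rw [sum_above_zWeight_mul_skewDim z z' ν l, hν]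
    push_cast
    ring
  have hcoeff : (((l.card : ℂ) + 1) * (z * z' + l.card) - (μ.card + 1) * (μ.card + z * z'))
      * ∑ ν ∈ above μ, (skewDim ν l : ℂ)
      = (((l.card : ℂ) + 1) * (z * z' + l.card) - (μ.card + 1) * (μ.card + z * z'))
        * skewDim μ l := by
    rcases h.lt_or_eq with hlt | heq
    · rw [skewDim_eq_sum_above hlt, Nat.cast_sum]
    · rw [heq]
      ring
  calc ∑ ν ∈ above l, zWeight z z' l ν * skewDim μ ν
      = ∑ ν ∈ above μ, ∑ ν' ∈ above l, zWeight z z' l ν' * skewDim ν ν' := by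
        rw [sum_comm]
        refine sum_congr rfl fun ν' hν' => ?_
        have := (mem_above.mp hν').2
        rw [skewDim_eq_sum_above (by omega), Nat.cast_sum, mul_sum]
    _ = _ := by
        rw [sum_congr rfl ih, sum_add_distrib, ← mul_sum, hcoeff,
          sum_above_sum_below_zWeight_mul_skewDim z z' h]
        ring
termination_by l.card + 1 - μ.card
decreasing_by omega

/-! ### Frobenius–Schur functions -/

lemma finsum_covers_eq_sum_above (l : YoungDiagram) (f : YoungDiagram → ℂ) :
    ∑ᶠ (ν : YoungDiagram) (_ : Covers l ν), f ν = ∑ ν ∈ above l, f ν :=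
  finsum_cond_eq_sum_of_cond_iff f fun _ => mem_above.symm

lemma finsum_covered_eq_sum_below (μ : YoungDiagram) (f : YoungDiagram → ℂ) :
    ∑ᶠ (κ : YoungDiagram) (_ : Covers κ μ), f κ = ∑ κ ∈ below μ, f κ :=
  finsum_cond_eq_sum_of_cond_iff f fun _ => mem_below.symm

lemma dim_cast_ne_zero (l : YoungDiagram) : (l.dim : ℂ) ≠ 0 :=
  Nat.cast_ne_zero.mpr (dim_pos l).ne'

theorem sum_below_dim_div_mul_FS (μ : YoungDiagram) {ν : YoungDiagram} {n : ℕ}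
    (hν : ν.card = n + 1) :
    ∑ κ ∈ below ν, (κ.dim : ℂ) / ν.dim * μ.FS κ
      = (∏ i ∈ range μ.card, ((n : ℂ) - i)) * skewDim μ ν / ν.dim := by
  have hterm : ∀ κ ∈ below ν, (κ.dim : ℂ) / ν.dim * μ.FS κ
      = (∏ i ∈ range μ.card, ((n : ℂ) - i)) / ν.dim * skewDim μ κ := by
    intro κ hκ
    have hκ : κ.card = n := by have := (mem_below.mp hκ).2; omega
    have := dim_cast_ne_zero κ
    rw [FS, hκ]
    field_simp
  rw [sum_congr rfl hterm, ← mul_sum, ← Nat.cast_sum]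
  rcases le_or_gt μ.card n with h | h
  · rw [← skewDim_eq_sum_below (by omega)]
    ring
  · rw [prod_eq_zero (mem_range.mpr h) (sub_self _)]
    simp

lemma sub_mul_FS_of_covers {κ μ : YoungDiagram} (h : Covers κ μ) (l : YoungDiagram) :
    ((l.card : ℂ) + 1 - μ.card) * κ.FS l
      = (∏ i ∈ range μ.card, ((l.card : ℂ) - i)) * skewDim κ l / l.dim := by
  rw [FS, h.2, prod_range_succ]
  push_cast
  ring

theorem sum_above_mul_sum_below_FS (z z' c : ℂ) (μ l : YoungDiagram) :
    ∑ ν ∈ above l, poch z l ν * poch z' l ν * ν.dim / (c * l.dim)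
        * ∑ κ ∈ below ν, (κ.dim : ℂ) / ν.dim * μ.FS κ
      = (∏ i ∈ range μ.card, ((l.card : ℂ) - i)) / (c * l.dim)
        * ∑ ν ∈ above l, zWeight z z' l ν * skewDim μ ν := by
  rw [mul_sum]
  refine sum_congr rfl fun ν hν => ?_
  have := dim_cast_ne_zero ν
  rw [sum_below_dim_div_mul_FS μ (mem_above.mp hν).2, zWeight]
  field_simp

theorem sub_mul_sum_below_FS (z z' : ℂ) (μ l : YoungDiagram) :
    ((l.card : ℂ) + 1 - μ.card) * ∑ κ ∈ below μ, poch z κ μ * poch z' κ μ * κ.FS l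
      = (∏ i ∈ range μ.card, ((l.card : ℂ) - i)) / l.dim
        * ∑ κ ∈ below μ, zWeight z z' κ μ * skewDim κ l := by
  rw [mul_sum, mul_sum]
  refine sum_congr rfl fun κ hκ => ?_
  rw [zWeight, mul_left_comm, sub_mul_FS_of_covers (mem_below.mp hκ)]
  ring

end YoungDiagram

open YoungDiagram in
/-- Action of `Tₙ - 1` (the up–down transition operator of the
z-measures, with up probabilities `p↑(λ,ν) = (z)_{ν/λ}(z')_{ν/λ} dim ν /((zz'+n)(n+1) dim λ)`
and down probabilities `p↓(ν,κ) = dim κ / dim ν`) on the Frobenius–Schur function `FS_μ`: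
for `|μ| = m`, `|λ| = n` and `zz' + n ≠ 0`,
`(Tₙ FS_μ)(λ) - FS_μ(λ) = -(m(m-1+zz')/((n+1)(zz'+n))) FS_μ(λ)
   + ((n+1-m)/((n+1)(zz'+n))) ∑_{μ• ↗ μ} (z)_{μ/μ•}(z')_{μ/μ•} FS_{μ•}(λ)`. -/
theorem updown_generator_on_FS (z z' : ℂ) (μ l : YoungDiagram) (m n : ℕ)
    (hm : μ.card = m) (hn : l.card = n) (hzz : z * z' + (n : ℂ) ≠ 0) :
    (∑ᶠ (ν : YoungDiagram) (_ : Covers l ν),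
        (poch z l ν * poch z' l ν * (ν.dim : ℂ)
            / ((z * z' + (n : ℂ)) * ((n : ℂ) + 1) * (l.dim : ℂ)))
          * ∑ᶠ (κ : YoungDiagram) (_ : Covers κ ν), ((κ.dim : ℂ) / (ν.dim : ℂ)) * μ.FS κ)
      - μ.FS l
    = -((m : ℂ) * ((m : ℂ) - 1 + z * z') / (((n : ℂ) + 1) * (z * z' + (n : ℂ)))) * μ.FS l
      + (((n : ℂ) + 1 - (m : ℂ)) / (((n : ℂ) + 1) * (z * z' + (n : ℂ))))
          * ∑ᶠ (κ : YoungDiagram) (_ : Covers κ μ),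
              poch z κ μ * poch z' κ μ * κ.FS l := by
  subst hm hn
  have hA : (z * z' + l.card) * (l.card + 1) ≠ 0 := mul_ne_zero hzz (Nat.cast_add_one_ne_zero _)
  have hl := dim_cast_ne_zero l
  simp only [finsum_covers_eq_sum_above, finsum_covered_eq_sum_below]
  rw [sum_above_mul_sum_below_FS, sum_above_zWeight_mul_skewDim,
    div_mul_eq_mul_div _ _ (∑ κ ∈ below μ, _), sub_mul_sum_below_FS, FS]
  field_simp
  ring
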